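/- Energy–Chern–Simons identity: for a finite-energy solution (A, Φ) of the perturbed Seiberg–Witten equations on Y × ℝ over a rational homology sphere Y, with gauge equivalence classes converging to α as t → −∞ and β as t → +∞, the perturbed energy equals E_{λ,H}(A,Φ) = 2cs_{λ,H}(α) − 2cs_{λ,H}(β). -/

import Mathlib

open MeasureTheory Filter

/-- Lemma 2.9: for a finite-energy solution of the perturbed Seiberg–Witten
equations on `Y × ℝ` over a rational homology sphere — i.e., in temporal gauge, a negative
gradient flow line `u` of the perturbed Chern–Simons functional `cs = cs_{λ,H}` — whose
gauge classes converge to `α = [p]` as `t → −∞` and `β = [q]` as `t → +∞`, the perturbed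
energy satisfies `E_{λ,H}(A,Φ) = 2·cs(α) − 2·cs(β)`.
Abstract model: `H` is the (L²) configuration space, `cs` the perturbed Chern–Simons
functional with gradient `G` (so `∇cs = −sw_{λ,H}` up to sign, by Lemma 2.7), the flow
equation is `u' = −G(u)`, and the energy is `∫ (‖u'‖² + ‖G(u)‖²)`. -/
theorem stmt_11
    {H : Type*} [NormedAddCommGroup H] [InnerProductSpace ℝ H] [CompleteSpace H]
    (cs : H → ℝ) (G : H → H)
    (hgrad : ∀ x : H, HasGradientAt cs (G x) x)
    (u : ℝ → H) (hu : Differentiable ℝ u)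
    (heq : ∀ t : ℝ, deriv u t = -G (u t))
    (p q : H)
    (hp : Tendsto u atBot (nhds p))
    (hq : Tendsto u atTop (nhds q))
    (hE : Integrable (fun t : ℝ => ‖deriv u t‖ ^ 2 + ‖G (u t)‖ ^ 2)) :
    ∫ t : ℝ, (‖deriv u t‖ ^ 2 + ‖G (u t)‖ ^ 2) = 2 * cs p - 2 * cs q := by
  -- derivative of cs ∘ u is -‖G(u t)‖²
  have hderiv : ∀ t : ℝ, HasDerivAt (fun s => cs (u s)) (-‖G (u t)‖ ^ 2) t := by
    intro t
    have h1 : HasFDerivAt cs ((InnerProductSpace.toDual ℝ H) (G (u t))) (u t) :=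
      (hgrad (u t)).hasFDerivAt
    have h2 : HasDerivAt u (deriv u t) t := (hu t).hasDerivAt
    have := h1.comp_hasDerivAt t h2
    refine this.congr_deriv ?_
    simp only [InnerProductSpace.toDual_apply_apply, heq t, inner_neg_right,
      real_inner_self_eq_norm_sq]
  have hint : ∀ t : ℝ, ‖deriv u t‖ ^ 2 + ‖G (u t)‖ ^ 2 = -2 * (-‖G (u t)‖ ^ 2) := by
    intro t; rw [heq t, norm_neg]; ring
  have hE' : Integrable (fun t : ℝ => -‖G (u t)‖ ^ 2) := by
    have := hE.const_mul (-(1:ℝ)/2)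
    convert this using 2 with t
    rw [hint t]; ring
  have hp' : Tendsto (fun s => cs (u s)) atBot (nhds (cs p)) :=
    ((hgrad p).hasFDerivAt.continuousAt.tendsto).comp hp
  have hq' : Tendsto (fun s => cs (u s)) atTop (nhds (cs q)) :=
    ((hgrad q).hasFDerivAt.continuousAt.tendsto).comp hq
  have key := integral_of_hasDerivAt_of_tendsto hderiv hE' hp' hq'
  calc ∫ t : ℝ, (‖deriv u t‖ ^ 2 + ‖G (u t)‖ ^ 2)
      = ∫ t : ℝ, -2 * (-‖G (u t)‖ ^ 2) := by simp_rw [hint]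
    _ = -2 * ∫ t : ℝ, (-‖G (u t)‖ ^ 2) := integral_const_mul _ _
    _ = 2 * cs p - 2 * cs q := by rw [key]; ring
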